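/- Let M be a symmetric irreducible r×r 0–1 transition matrix and let A : Σ̂_M → ℝ be Lipschitz continuous. For each β > 0, let λ_β be the effective constant for the observable βA. Then the limit c_A := lim_{β→∞} λ_β/β exists. -/

import Mathlib

/-!
For a fixed invariant measure `μ`, the quantity `∫ (β A(y, ·) + φ) dμ + h_μ` is affine in
`(β, φ)`, so its supremum `G⁺` over `μ` is convex in `(β, φ)`. Comparing the fixed-point
equation for `β = a β₁ + b β₂` with the convex combination of those for `β₁` and `β₂`, and then
taking the supremum over `y` of `φ_β - (a φ_{β₁} + b φ_{β₂})`, shows that `β ↦ λ_β` is convex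
on `(0, ∞)`; bounding the integrand by `β sup A + sup φ_β` shows `λ_β ≤ β sup A + sup_μ h_μ`.
A convex function of at most linear growth has monotone secant slopes `(λ_β - λ₁) / (β - 1)`
that are bounded above, and their limit is also the limit of `λ_β / β`. The supremum is not
over the empty set because irreducibility provides a periodic orbit, whose equidistributed
measure is invariant.
-/

open MeasureTheory Filter Topology Real

/-- The one-sided subshift of finite type defined by the 0-1 transition matrix `M`:
sequences `x : ℕ → Fin r` with `M (x j) (x (j+1)) = 1` for all `j`. -/
abbrev Shift (r : ℕ) (M : Fin r → Fin r → Bool) : Type :=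
  {x : ℕ → Fin r // ∀ j : ℕ, M (x j) (x (j + 1)) = true}

variable {r : ℕ} {M : Fin r → Fin r → Bool}

/-- The matrix `M` is irreducible: any symbol can be joined to any other by an
admissible path of positive length. -/
def Irred (M : Fin r → Fin r → Bool) : Prop :=
  ∀ i j : Fin r, ∃ n : ℕ, ∃ w : Fin (n + 2) → Fin r,
    w 0 = i ∧ w (Fin.last (n + 1)) = j ∧
    ∀ k : Fin (n + 1), M (w k.castSucc) (w k.succ) = true

/-- The left shift map on the subshift. -/
def shiftMap (x : Shift r M) : Shift r M :=
  ⟨fun j => x.1 (j + 1), fun j => x.2 (j + 1)⟩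

/-- The metric `d(x,y) = Λ^k`, `k = min { j : x_j ≠ y_j }`, `d(x,x) = 0`. -/
noncomputable def shiftDist (Λ : ℝ) (x y : Shift r M) : ℝ :=
  letI := Classical.decEq (Shift r M)
  if h : x = y then 0
  else Λ ^ Nat.find (show ∃ j : ℕ, x.1 j ≠ y.1 j by
    by_contra hc
    push_neg at hc
    exact h (Subtype.ext (funext hc)))

/-- `φ` is Lipschitz with constant `K` for the metric `shiftDist Λ`. -/
def LipBnd (Λ K : ℝ) (φ : Shift r M → ℝ) : Prop :=
  ∀ x y : Shift r M, |φ x - φ y| ≤ K * shiftDist Λ x y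

/-- `φ` is Lipschitz continuous for the metric `shiftDist Λ`. -/
def IsLip (Λ : ℝ) (φ : Shift r M → ℝ) : Prop :=
  ∃ K : ℝ, LipBnd Λ K φ

/-- The best Lipschitz constant of `φ`. -/
noncomputable def lipC (Λ : ℝ) (φ : Shift r M → ℝ) : ℝ :=
  sInf {K : ℝ | 0 ≤ K ∧ LipBnd Λ K φ}

/-- The uniform norm `‖φ‖₀`. -/
noncomputable def unorm (φ : Shift r M → ℝ) : ℝ :=
  ⨆ x : Shift r M, |φ x|

/-- An observable on the natural extension `Σ̂_M ⊂ Σ*_M × Σ_M` (with `Σ*_M`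
canonically identified with `Σ_M`), as a function of `(y, x)`; it is Lipschitz with
constant `K` for the max-metric. -/
def LipBnd2 (Λ K : ℝ) (A : Shift r M → Shift r M → ℝ) : Prop :=
  ∀ y x y' x' : Shift r M,
    |A y x - A y' x'| ≤ K * max (shiftDist Λ y y') (shiftDist Λ x x')

/-- `A` is Lipschitz continuous on `Σ̂_M`. -/
def IsLip2 (Λ : ℝ) (A : Shift r M → Shift r M → ℝ) : Prop :=
  ∃ K : ℝ, LipBnd2 Λ K A

/-- The best Lipschitz constant of the observable `A`. -/
noncomputable def lipC2 (Λ : ℝ) (A : Shift r M → Shift r M → ℝ) : ℝ :=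
  sInf {K : ℝ | 0 ≤ K ∧ LipBnd2 Λ K A}

/-- The uniform norm `‖A‖₀` of the observable. -/
noncomputable def unorm2 (A : Shift r M → Shift r M → ℝ) : ℝ :=
  ⨆ p : Shift r M × Shift r M, |A p.1 p.2|

/-- `μ` is a `σ`-invariant Borel probability measure on the subshift. -/
def InvProb (μ : Measure (Shift r M)) : Prop :=
  IsProbabilityMeasure μ ∧ μ.map shiftMap = μ

/-- Entropy of the cylinder partition of length `n`:
`H_n(μ) = - ∑_{|w| = n} μ([w]) log μ([w])`. -/
noncomputable def cylEnt (μ : Measure (Shift r M)) (n : ℕ) : ℝ :=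
  ∑ w : Fin n → Fin r,
    Real.negMulLog ((μ {x : Shift r M | ∀ i : Fin n, x.1 i.1 = w i}).toReal)

/-- The Kolmogorov–Sinai entropy `h_μ(σ)` of an invariant measure on the subshift:
since the cylinder partition is generating and `n ↦ H_n(μ)` is subadditive,
`h_μ(σ) = lim_n H_n(μ)/n = inf_n H_n(μ)/n`. -/
noncomputable def entropy (μ : Measure (Shift r M)) : ℝ :=
  ⨅ n : ℕ, cylEnt μ (n + 1) / (n + 1)

/-- The operator
`G⁺_A(φ)(y) = sup_{μ ∈ M_σ} [ ∫ (A(y,x) + φ(x)) dμ(x) + h_μ(σ) ]`. -/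
noncomputable def Gplus (A : Shift r M → Shift r M → ℝ)
    (φ : Shift r M → ℝ) (y : Shift r M) : ℝ :=
  sSup {t : ℝ | ∃ μ : Measure (Shift r M), InvProb μ ∧
    t = ∫ x, (A y x + φ x) ∂μ + entropy μ}

/-- The maximal ergodic average `max_{μ ∈ M_σ} ∫ B dμ`. -/
noncomputable def maxErg (B : Shift r M → ℝ) : ℝ :=
  sSup {t : ℝ | ∃ μ : Measure (Shift r M), InvProb μ ∧ t = ∫ x, B x ∂μ}

/-- The quotient norm on functions modulo additive constants:
`‖g‖_c = inf_{γ ∈ ℝ} ‖g + γ‖₀`. -/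
noncomputable def cnorm (g : Shift r M → ℝ) : ℝ :=
  ⨅ γ : ℝ, unorm (fun x => g x + γ)

section Pressure

variable {X : Type*} [MeasurableSpace X]

def BddMeasurable (f : X → ℝ) : Prop :=
  Measurable f ∧ ∃ C, ∀ x, |f x| ≤ C

namespace BddMeasurable

variable {f g : X → ℝ}

lemma const (c : ℝ) : BddMeasurable fun _ : X => c :=
  ⟨measurable_const, |c|, fun _ => le_rfl⟩

lemma add (hf : BddMeasurable f) (hg : BddMeasurable g) : BddMeasurable fun x => f x + g x := by
  obtain ⟨hfm, C, hC⟩ := hf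
  obtain ⟨hgm, D, hD⟩ := hg
  exact ⟨hfm.add hgm, C + D, fun x => (abs_add_le _ _).trans (add_le_add (hC x) (hD x))⟩

lemma const_mul (hf : BddMeasurable f) (a : ℝ) : BddMeasurable fun x => a * f x := by
  obtain ⟨hfm, C, hC⟩ := hf
  refine ⟨hfm.const_mul a, |a| * C, fun x => ?_⟩
  rw [abs_mul]
  exact mul_le_mul_of_nonneg_left (hC x) (abs_nonneg a)

lemma integrable (hf : BddMeasurable f) (μ : Measure X) [IsFiniteMeasure μ] : Integrable f μ := by
  obtain ⟨hfm, C, hC⟩ := hf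
  exact .of_bound hfm.aestronglyMeasurable C (ae_of_all _ hC)

lemma bddAbove (hf : BddMeasurable f) : BddAbove (Set.range f) := by
  obtain ⟨-, C, hC⟩ := hf
  exact ⟨C, by rintro _ ⟨x, rfl⟩; exact (le_abs_self _).trans (hC x)⟩

end BddMeasurable

lemma integral_le_of_forall_le {μ : Measure X} [IsProbabilityMeasure μ] {f : X → ℝ} {c : ℝ}
    (hf : Integrable f μ) (hfc : ∀ x, f x ≤ c) : ∫ x, f x ∂μ ≤ c := by
  simpa using integral_mono hf (integrable_const c) hfc

noncomputable def pressure (S : Set (Measure X)) (h : Measure X → ℝ) (f : X → ℝ) : ℝ :=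
  sSup {t | ∃ μ ∈ S, t = ∫ x, f x ∂μ + h μ}

variable {S : Set (Measure X)} {h : Measure X → ℝ} {f g : X → ℝ}

lemma integral_add_le_pressure (hS : ∀ μ ∈ S, IsProbabilityMeasure μ) (hh : BddAbove (h '' S))
    (hf : BddMeasurable f) {μ : Measure X} (hμ : μ ∈ S) :
    ∫ x, f x ∂μ + h μ ≤ pressure S h f := by
  obtain ⟨C, hC⟩ := hf.bddAbove
  obtain ⟨D, hD⟩ := hh
  refine le_csSup ⟨C + D, ?_⟩ ⟨μ, hμ, rfl⟩
  rintro _ ⟨ν, hν, rfl⟩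
  have := hS ν hν
  exact add_le_add (integral_le_of_forall_le (hf.integrable ν) fun x => hC ⟨x, rfl⟩)
    (hD ⟨ν, hν, rfl⟩)

lemma pressure_le {c : ℝ} (hS : S.Nonempty) (H : ∀ μ ∈ S, ∫ x, f x ∂μ + h μ ≤ c) :
    pressure S h f ≤ c := by
  obtain ⟨μ, hμ⟩ := hS
  refine csSup_le ⟨_, μ, hμ, rfl⟩ ?_
  rintro _ ⟨ν, hν, rfl⟩
  exact H ν hν

lemma pressure_le_pressure_add (hS : ∀ μ ∈ S, IsProbabilityMeasure μ) (hh : BddAbove (h '' S))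
    (hSne : S.Nonempty) {c : ℝ} (hf : BddMeasurable f) (hg : BddMeasurable g)
    (hfg : ∀ x, f x ≤ g x + c) : pressure S h f ≤ pressure S h g + c := by
  refine pressure_le hSne fun μ hμ => ?_
  have := hS μ hμ
  have hint : ∫ x, f x ∂μ ≤ ∫ x, g x ∂μ + c := by
    simpa [integral_add (hg.integrable μ) (integrable_const c)] using
      integral_mono (hf.integrable μ) ((hg.integrable μ).add (integrable_const c)) hfg
  linarith [integral_add_le_pressure hS hh hg hμ]

lemma pressure_convex_comb (hS : ∀ μ ∈ S, IsProbabilityMeasure μ) (hh : BddAbove (h '' S))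
    (hSne : S.Nonempty) (hf : BddMeasurable f) (hg : BddMeasurable g) {a b : ℝ}
    (ha : 0 ≤ a) (hb : 0 ≤ b) (hab : a + b = 1) :
    pressure S h (fun x => a * f x + b * g x) ≤ a * pressure S h f + b * pressure S h g := by
  refine pressure_le hSne fun μ hμ => ?_
  have := hS μ hμ
  have hsplit : ∫ x, (a * f x + b * g x) ∂μ + h μ =
      a * (∫ x, f x ∂μ + h μ) + b * (∫ x, g x ∂μ + h μ) := by
    rw [integral_add ((hf.integrable μ).const_mul a) ((hg.integrable μ).const_mul b),
      integral_const_mul, integral_const_mul]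
    linear_combination (h μ) * hab.symm
  rw [hsplit]
  gcongr
  · exact integral_add_le_pressure hS hh hf hμ
  · exact integral_add_le_pressure hS hh hg hμ

end Pressure

section EffectiveConstant

variable {X : Type*} [MeasurableSpace X] {S : Set (Measure X)} {h : Measure X → ℝ}
  {A : X → X → ℝ} {φ : ℝ → X → ℝ} {lam : ℝ → ℝ}

theorem convexOn_of_pressure_eq (hS : ∀ μ ∈ S, IsProbabilityMeasure μ)
    (hh : BddAbove (h '' S)) (hSne : S.Nonempty) (hA : ∀ y, BddMeasurable (A y))
    (hφ : ∀ β > 0, BddMeasurable (φ β))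
    (heff : ∀ β > 0, ∀ y, pressure S h (fun x => β * A y x + φ β x) = φ β y + lam β) :
    ConvexOn ℝ (Set.Ioi 0) lam := by
  refine ⟨convex_Ioi 0, fun β₁ hβ₁ β₂ hβ₂ a b ha hb hab => ?_⟩
  have hβ : 0 < a * β₁ + b * β₂ := convex_Ioi (0 : ℝ) hβ₁ hβ₂ ha hb hab
  simp only [smul_eq_mul]
  set β := a * β₁ + b * β₂
  have hφ₁ := hφ β₁ hβ₁
  have hφ₂ := hφ β₂ hβ₂
  let ψ := fun x => a * φ β₁ x + b * φ β₂ x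
  have hψ : BddMeasurable ψ := (hφ₁.const_mul a).add (hφ₂.const_mul b)
  have hgap : BddAbove (Set.range fun x => φ β x - ψ x) :=
    ((hφ β hβ).add (hψ.const_mul (-1))).bddAbove.mono (by
      rintro _ ⟨x, rfl⟩; exact ⟨x, by ring⟩)
  set s := ⨆ x, (φ β x - ψ x)
  have hslice : ∀ β' y, BddMeasurable (φ β') → BddMeasurable fun x => β' * A y x + φ β' x :=
    fun β' y hφ' => ((hA y).const_mul β').add hφ'
  have key : ∀ y, φ β y - ψ y ≤ s + (a * lam β₁ + b * lam β₂) - lam β := by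
    intro y
    have := calc φ β y + lam β
        = pressure S h (fun x => β * A y x + φ β x) := (heff β hβ y).symm
      _ ≤ pressure S h (fun x => β * A y x + ψ x) + s :=
        pressure_le_pressure_add hS hh hSne (hslice β y (hφ β hβ)) (((hA y).const_mul β).add hψ)
          fun x => by linarith [le_ciSup hgap x]
      _ = pressure S h (fun x => a * (β₁ * A y x + φ β₁ x) + b * (β₂ * A y x + φ β₂ x)) + s := by
        congr 2; funext x; ring
      _ ≤ a * pressure S h (fun x => β₁ * A y x + φ β₁ x)
            + b * pressure S h (fun x => β₂ * A y x + φ β₂ x) + s := by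
        gcongr
        exact pressure_convex_comb hS hh hSne (hslice β₁ y hφ₁) (hslice β₂ y hφ₂) ha hb hab
      _ = ψ y + (a * lam β₁ + b * lam β₂) + s := by
        rw [heff β₁ hβ₁ y, heff β₂ hβ₂ y]; ring
    linarith
  have : Nonempty X := let ⟨μ, hμ⟩ := hSne; @nonempty_of_isProbabilityMeasure _ _ μ (hS μ hμ)
  linarith [ciSup_le key]

theorem le_mul_add_pressure_zero_of_pressure_eq (hS : ∀ μ ∈ S, IsProbabilityMeasure μ)
    (hh : BddAbove (h '' S)) (hSne : S.Nonempty) (hA : ∀ y, BddMeasurable (A y)) {C : ℝ}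
    (hAC : ∀ y x, A y x ≤ C) (hφ : ∀ β > 0, BddMeasurable (φ β))
    (heff : ∀ β > 0, ∀ y, pressure S h (fun x => β * A y x + φ β x) = φ β y + lam β)
    (β : ℝ) (hβ : 0 < β) : lam β ≤ C * β + pressure S h 0 := by
  set s := iSup (φ β)
  have key : ∀ y, φ β y ≤ s + (C * β + pressure S h 0) - lam β := by
    intro y
    have := calc φ β y + lam β
        = pressure S h (fun x => β * A y x + φ β x) := (heff β hβ y).symm
      _ ≤ pressure S h 0 + (C * β + s) :=
        pressure_le_pressure_add hS hh hSne (((hA y).const_mul β).add (hφ β hβ))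
          (BddMeasurable.const 0) fun x => by
            have := le_ciSup (hφ β hβ).bddAbove x
            have := mul_le_mul_of_nonneg_left (hAC y x) hβ.le
            simp only [Pi.zero_apply, zero_add]
            linarith
    linarith
  have : Nonempty X := let ⟨μ, hμ⟩ := hSne; @nonempty_of_isProbabilityMeasure _ _ μ (hS μ hμ)
  linarith [ciSup_le key]

end EffectiveConstant

theorem ConvexOn.exists_tendsto_div_atTop {f : ℝ → ℝ} (hf : ConvexOn ℝ (Set.Ioi 0) f) {C D : ℝ}
    (hfle : ∀ β > 0, f β ≤ C * β + D) : ∃ c, Tendsto (fun β => f β / β) atTop (𝓝 c) := by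
  let g := fun β => (f β - f 1) / (β - 1)
  have h1 : ∀ β : ℝ, 1 < max β 2 := fun β => one_lt_two.trans_le (le_max_right β 2)
  have hmono : Monotone fun β => g (max β 2) := fun u v huv =>
    hf.secant_mono (Set.mem_Ioi.2 one_pos) (zero_lt_one.trans (h1 u)) (zero_lt_one.trans (h1 v))
      (h1 u).ne' (h1 v).ne' (max_le_max huv le_rfl)
  have hbdd : BddAbove (Set.range fun β => g (max β 2)) := by
    refine ⟨C + |C + D - f 1|, ?_⟩
    rintro _ ⟨β, rfl⟩
    have h2 : 2 ≤ max β 2 := le_max_right _ _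
    have := hfle (max β 2) (by linarith)
    simp only [g]
    rw [div_le_iff₀ (by linarith)]
    nlinarith [le_abs_self (C + D - f 1), abs_nonneg (C + D - f 1)]
  have hg : Tendsto g atTop (𝓝 (⨆ β, g (max β 2))) :=
    (tendsto_atTop_ciSup hmono hbdd).congr' <| by
      filter_upwards [eventually_ge_atTop 2] with β hβ
      simp [max_eq_left hβ]
  have hlim := (hg.mul ((tendsto_const_nhds (x := (1 : ℝ))).sub tendsto_inv_atTop_zero)).add
    (tendsto_inv_atTop_zero.const_mul (f 1))
  refine ⟨_, hlim.congr' ?_⟩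
  filter_upwards [eventually_gt_atTop 1] with β hβ
  have : β - 1 ≠ 0 := sub_ne_zero.2 hβ.ne'
  simp only [g]
  field_simp
  ring

lemma Function.IsPeriodicPt.map_sum_dirac_iterate {X : Type*} [MeasurableSpace X] {f : X → X}
    (hf : Measurable f) {p : ℕ} {z : X} (hz : Function.IsPeriodicPt f p z) :
    (∑ k ∈ Finset.range p, Measure.dirac (f^[k] z)).map f =
      ∑ k ∈ Finset.range p, Measure.dirac (f^[k] z) := by
  rw [Measure.map_finset_sum hf.aemeasurable]
  simp_rw [Measure.map_dirac' hf, ← Function.iterate_succ_apply' f]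
  cases p with
  | zero => simp
  | succ q => rw [Finset.sum_range_succ, Finset.sum_range_succ', hz.eq, Function.iterate_zero_apply]

section Shift

variable {r : ℕ} {M : Fin r → Fin r → Bool} {Λ K : ℝ}

lemma shiftDist_nonneg (hΛ : 0 ≤ Λ) (x y : Shift r M) : 0 ≤ shiftDist Λ x y := by
  unfold shiftDist
  split_ifs <;> positivity

lemma shiftDist_self (x : Shift r M) : shiftDist Λ x x = 0 := by
  simp [shiftDist]

lemma shiftDist_le_pow (hΛ0 : 0 ≤ Λ) (hΛ1 : Λ ≤ 1) {x y : Shift r M} {k : ℕ}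
    (h : ∀ j < k, x.1 j = y.1 j) : shiftDist Λ x y ≤ Λ ^ k := by
  unfold shiftDist
  split_ifs
  · positivity
  · exact pow_le_pow_of_le_one hΛ0 hΛ1 (Nat.le_find_iff _ _ |>.2 fun m hm hne => hne (h m hm))

lemma shiftDist_le_one (hΛ0 : 0 ≤ Λ) (hΛ1 : Λ ≤ 1) (x y : Shift r M) : shiftDist Λ x y ≤ 1 := by
  simpa using shiftDist_le_pow hΛ0 hΛ1 (k := 0) (x := x) (y := y) (by simp)

namespace LipBnd

variable {φ : Shift r M → ℝ}

lemma le_abs_mul_pow (hΛ0 : 0 ≤ Λ) (hΛ1 : Λ ≤ 1) (hφ : LipBnd Λ K φ) {x y : Shift r M} {k : ℕ}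
    (h : ∀ j < k, x.1 j = y.1 j) : |φ x - φ y| ≤ |K| * Λ ^ k :=
  calc |φ x - φ y| ≤ K * shiftDist Λ x y := hφ x y
    _ ≤ |K| * shiftDist Λ x y :=
      mul_le_mul_of_nonneg_right (le_abs_self K) (shiftDist_nonneg hΛ0 x y)
    _ ≤ |K| * Λ ^ k := mul_le_mul_of_nonneg_left (shiftDist_le_pow hΛ0 hΛ1 h) (abs_nonneg K)

lemma continuous (hΛ0 : 0 ≤ Λ) (hΛ1 : Λ < 1) (hφ : LipBnd Λ K φ) : Continuous φ := by
  refine continuous_iff_continuousAt.2 fun x => Metric.tendsto_nhds.2 fun ε hε => ?_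
  obtain ⟨k, hk⟩ : ∃ k : ℕ, |K| * Λ ^ k < ε := by
    have := (tendsto_pow_atTop_nhds_zero_of_lt_one hΛ0 hΛ1).const_mul |K|
    rw [mul_zero] at this
    exact (this.eventually_lt_const hε).exists
  have hcyl : ∀ᶠ y in 𝓝 x, ∀ j < k, y.1 j = x.1 j :=
    (eventually_all_finite (Set.finite_Iio k)).2 fun j _ =>
      ((continuous_apply j).comp continuous_subtype_val).continuousAt
        ((isOpen_discrete {x.1 j}).mem_nhds rfl)
  filter_upwards [hcyl] with y hy
  exact (hφ.le_abs_mul_pow hΛ0 hΛ1.le hy).trans_lt hk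

lemma bddMeasurable (hΛ0 : 0 ≤ Λ) (hΛ1 : Λ < 1) (hφ : LipBnd Λ K φ) : BddMeasurable φ := by
  refine ⟨(hφ.continuous hΛ0 hΛ1).measurable, ?_⟩
  rcases isEmpty_or_nonempty (Shift r M) with _ | ⟨⟨z⟩⟩
  · exact ⟨0, fun x => isEmptyElim x⟩
  refine ⟨|φ z| + |K|, fun x => ?_⟩
  have := hφ.le_abs_mul_pow hΛ0 hΛ1.le (x := x) (y := z) (k := 0) (by simp)
  rw [pow_zero, mul_one] at this
  linarith [abs_sub_abs_le_abs_sub (φ x) (φ z)]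

end LipBnd

namespace LipBnd2

variable {A : Shift r M → Shift r M → ℝ}

lemma lipBnd_right (hΛ : 0 ≤ Λ) (hA : LipBnd2 Λ K A) (y : Shift r M) : LipBnd Λ K (A y) := by
  intro x x'
  simpa [shiftDist_self, max_eq_right (shiftDist_nonneg hΛ x x')] using hA y x y x'

lemma le_add_abs (hΛ0 : 0 ≤ Λ) (hΛ1 : Λ ≤ 1) (hA : LipBnd2 Λ K A) (y x y' x' : Shift r M) :
    A y x ≤ A y' x' + |K| := by
  have hd : max (shiftDist Λ y y') (shiftDist Λ x x') ≤ 1 :=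
    max_le (shiftDist_le_one hΛ0 hΛ1 _ _) (shiftDist_le_one hΛ0 hΛ1 _ _)
  have hd0 : 0 ≤ max (shiftDist Λ y y') (shiftDist Λ x x') :=
    le_max_of_le_left (shiftDist_nonneg hΛ0 _ _)
  have := (le_abs_self _).trans (hA y x y' x')
  nlinarith [le_abs_self K, abs_nonneg K]

end LipBnd2

end Shift

section InvariantMeasure

variable {r : ℕ} {M : Fin r → Fin r → Bool}

lemma cylEnt_nonneg (μ : Measure (Shift r M)) [IsProbabilityMeasure μ] (n : ℕ) :
    0 ≤ cylEnt μ n :=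
  Finset.sum_nonneg fun _ _ => negMulLog_nonneg measureReal_nonneg measureReal_le_one

lemma entropy_le_card (μ : Measure (Shift r M)) [IsProbabilityMeasure μ] : entropy μ ≤ r :=
  calc entropy μ ≤ cylEnt μ (0 + 1) / ((0 : ℕ) + 1) :=
        ciInf_le (f := fun n : ℕ => cylEnt μ (n + 1) / (n + 1))
          ⟨0, by rintro _ ⟨n, rfl⟩; exact div_nonneg (cylEnt_nonneg μ _) n.cast_add_one_pos.le⟩ 0
    _ ≤ ∑ _w : Fin 1 → Fin r, (1 : ℝ) := by
        simp only [Nat.cast_zero, zero_add, div_one]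
        exact Finset.sum_le_sum fun _ _ =>
          (negMulLog_le_one_sub_self measureReal_nonneg).trans (sub_le_self _ measureReal_nonneg)
    _ = r := by simp

lemma bddAbove_entropy_image_invProb :
    BddAbove (entropy '' {μ : Measure (Shift r M) | InvProb μ}) := by
  refine ⟨r, ?_⟩
  rintro _ ⟨μ, hμ, rfl⟩
  have := hμ.1
  exact entropy_le_card μ

lemma shiftMap_iterate_apply (m : ℕ) (x : Shift r M) (j : ℕ) :
    (shiftMap^[m] x).1 j = x.1 (j + m) := by
  induction m generalizing j with
  | zero => rfl
  | succ m ih =>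
    rw [Function.iterate_succ_apply', shiftMap]
    simp only [ih, add_right_comm, add_assoc]

open Fin.NatCast in
lemma exists_isPeriodicPt_shiftMap (hr : 0 < r) (hIrr : Irred M) :
    ∃ z : Shift r M, ∃ p > 0, Function.IsPeriodicPt shiftMap p z := by
  obtain ⟨n, w, hw0, hwlast, hstep⟩ := hIrr ⟨0, hr⟩ ⟨0, hr⟩
  have hcycle : ∀ k : Fin (n + 1), M (w k.castSucc) (w (k + 1).castSucc) = true := by
    intro k
    by_cases hk : k = Fin.last n
    · subst hk
      simpa [hw0, ← hwlast] using hstep (Fin.last n)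
    · have : (k + 1).castSucc = k.succ :=
        Fin.ext (by simp [Fin.val_add_one_of_lt (Fin.lt_last_iff_ne_last.2 hk)])
      rw [this]
      exact hstep k
  refine ⟨⟨fun j => w (j : Fin (n + 1)).castSucc, fun j => by simpa using hcycle j⟩,
    n + 1, n.succ_pos, Subtype.ext (funext fun j => ?_)⟩
  rw [shiftMap_iterate_apply]
  simp

lemma measurable_shiftMap : Measurable (shiftMap : Shift r M → Shift r M) := by
  apply Measurable.subtype_mk
  rw [measurable_pi_iff]
  exact fun j => (measurable_pi_apply (j + 1)).comp measurable_subtype_coe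

lemma exists_invProb (hr : 0 < r) (hIrr : Irred M) : ∃ μ : Measure (Shift r M), InvProb μ := by
  obtain ⟨z, p, hp, hz⟩ := exists_isPeriodicPt_shiftMap hr hIrr
  refine ⟨(p : ENNReal)⁻¹ • ∑ k ∈ Finset.range p, Measure.dirac (shiftMap^[k] z), ⟨?_⟩, ?_⟩
  · simp [ENNReal.inv_mul_cancel, hp.ne']
  · rw [Measure.map_smul, hz.map_sum_dirac_iterate measurable_shiftMap]

end InvariantMeasure

lemma Gplus_eq_pressure (B : Shift r M → Shift r M → ℝ) (φ : Shift r M → ℝ) (y : Shift r M) :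
    Gplus B φ y = pressure {μ | InvProb μ} entropy (fun x => B y x + φ x) :=
  rfl

theorem effective_constant_limit_exists_general
    (r : ℕ) (hr : 2 ≤ r) (M : Fin r → Fin r → Bool)
    (hIrr : Irred M)
    (Λ : ℝ) (hΛ : Λ ∈ Set.Ioo (0 : ℝ) 1)
    (A : Shift r M → Shift r M → ℝ) (hA : IsLip2 Λ A)
    (φ : ℝ → Shift r M → ℝ) (lam : ℝ → ℝ)
    (heff : ∀ β > (0 : ℝ), IsLip Λ (φ β) ∧
      ∀ y, Gplus (fun y x => β * A y x) (φ β) y = φ β y + lam β) :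
    ∃ c : ℝ, Filter.Tendsto (fun β => lam β / β) Filter.atTop (𝓝 c) := by
  obtain ⟨hΛ0, hΛ1⟩ := hΛ
  obtain ⟨K, hA⟩ := hA
  obtain ⟨μ₀, hμ₀⟩ := exists_invProb (by omega) hIrr
  obtain ⟨z⟩ := @nonempty_of_isProbabilityMeasure _ _ μ₀ hμ₀.1
  have hS : ∀ μ ∈ {μ : Measure (Shift r M) | InvProb μ}, IsProbabilityMeasure μ := fun _ hμ => hμ.1
  have hh := bddAbove_entropy_image_invProb (r := r) (M := M)
  have hAy y := (hA.lipBnd_right hΛ0.le y).bddMeasurable hΛ0.le hΛ1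
  have hφ : ∀ β > 0, BddMeasurable (φ β) := fun β hβ =>
    let ⟨_, hφβ⟩ := (heff β hβ).1
    hφβ.bddMeasurable hΛ0.le hΛ1
  have hP : ∀ β > 0, ∀ y, pressure {μ | InvProb μ} entropy (fun x => β * A y x + φ β x) =
      φ β y + lam β := fun β hβ y => (Gplus_eq_pressure _ _ y).symm.trans ((heff β hβ).2 y)
  exact (convexOn_of_pressure_eq hS hh ⟨μ₀, hμ₀⟩ hAy hφ hP).exists_tendsto_div_atTop
    (le_mul_add_pressure_zero_of_pressure_eq hS hh ⟨μ₀, hμ₀⟩ hAy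
      (fun y x => hA.le_add_abs hΛ0.le hΛ1.le y x z z) hφ hP)

/-- With `λ_β` the effective constant for the observable `βA`,
the limit `c_A = lim_{β → ∞} λ_β/β` exists. -/
theorem effective_constant_limit_exists
    (r : ℕ) (hr : 2 ≤ r) (M : Fin r → Fin r → Bool)
    (hSym : ∀ i j, M i j = M j i) (hIrr : Irred M)
    (Λ : ℝ) (hΛ : Λ ∈ Set.Ioo (0 : ℝ) 1)
    (A : Shift r M → Shift r M → ℝ) (hA : IsLip2 Λ A)
    (φ : ℝ → Shift r M → ℝ) (lam : ℝ → ℝ)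
    (heff : ∀ β > (0 : ℝ), IsLip Λ (φ β) ∧
      ∀ y, Gplus (fun y x => β * A y x) (φ β) y = φ β y + lam β) :
    ∃ c : ℝ, Filter.Tendsto (fun β => lam β / β) Filter.atTop (𝓝 c) :=
  effective_constant_limit_exists_general r hr M hIrr Λ hΛ A hA φ lam heff
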